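/- For every even positive integer n and every positive integer m, 2 · Σ_{l=0}^{n-1} (-1)^l l^m = - Σ_{l=0}^{m-1} C(m,l) E_l n^{m-l}, an identity of rational numbers. -/

import Mathlib

/-- The Euler numbers `E₀ = 1`, `∑_{k=0}^{n} C(n,k) Eₖ + Eₙ = 0` for `n ≥ 1`. -/
noncomputable def eulerNumber : ℕ → ℚ
  | 0 => 1
  | n + 1 => (-1/2) * ∑ k ∈ (Finset.range (n+1)).attach,
      ((n+1).choose k.1 : ℚ) * eulerNumber k.1
  decreasing_by exact Finset.mem_range.mp k.2

/-! The Euler polynomials `E_m(x) = ∑ C(m,l) E_l x^(m-l)` satisfy `E_m(x+1) + E_m(x) = 2 x^m`: after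
expanding `(x+1)^(m-l)` and regrouping by powers of `x`, the coefficient of `x^j` is
`C(m,j)` times the left side of the defining recursion of `E_(m-j)`, which vanishes unless `j = m`.
Hence `2 (-1)^l l^m = (-1)^l (E_m(l+1) + E_m(l))` telescopes, and for even `n` the alternating sum
is `E_m(0) - E_m(n)`, where `E_m(0) = E_m` cancels the top term of `E_m(n)`. -/

open Finset

lemma Nat.choose_mul_choose_sub_comm (m l j : ℕ) :
    m.choose l * (m - l).choose j = m.choose j * (m - j).choose l := by
  have hl := Nat.choose_mul (n := m) (Nat.le_add_right l j)
  have hj := Nat.choose_mul (n := m) (Nat.le_add_left j l)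
  rw [Nat.add_sub_cancel_left] at hl
  rw [Nat.add_sub_cancel] at hj
  rw [← hl, ← hj, Nat.choose_symm_add]

lemma eulerNumber_zero : eulerNumber 0 = 1 := by
  rw [eulerNumber]

lemma sum_range_choose_mul_eulerNumber_add_eulerNumber (n : ℕ) :
    ∑ k ∈ range (n + 1), (n.choose k : ℚ) * eulerNumber k + eulerNumber n =
      if n = 0 then 2 else 0 := by
  rcases n with _ | n
  · norm_num [eulerNumber_zero]
  · rw [sum_range_succ, Nat.choose_self, eulerNumber, ← sum_attach (range (n + 1))]
    simp only [Nat.cast_one, one_mul, Nat.add_one_ne_zero, if_false]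
    ring

noncomputable def eulerPoly (m : ℕ) (x : ℚ) : ℚ :=
  ∑ l ∈ range (m + 1), (m.choose l : ℚ) * eulerNumber l * x ^ (m - l)

lemma eulerPoly_zero_right (m : ℕ) : eulerPoly m 0 = eulerNumber m := by
  rw [eulerPoly, sum_range_succ, Nat.sub_self, pow_zero, Nat.choose_self,
    sum_eq_zero fun l hl => by rw [zero_pow (by grind), mul_zero]]
  simp

lemma eulerPoly_eq_sum_pow (m : ℕ) (x : ℚ) :
    eulerPoly m x = ∑ j ∈ range (m + 1), (m.choose j : ℚ) * eulerNumber (m - j) * x ^ j := by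
  rw [eulerPoly, ← sum_range_reflect]
  refine sum_congr rfl fun j hj => ?_
  have hjm : j ≤ m := Nat.lt_succ_iff.mp (mem_range.mp hj)
  rw [Nat.add_sub_cancel, Nat.sub_sub_self hjm, Nat.choose_symm hjm]

lemma eulerPoly_add_one (m : ℕ) (x : ℚ) :
    eulerPoly m (x + 1) = ∑ j ∈ range (m + 1), (m.choose j : ℚ) *
      (∑ l ∈ range (m - j + 1), ((m - j).choose l : ℚ) * eulerNumber l) * x ^ j := by
  simp only [eulerPoly, add_pow, one_pow, mul_one, mul_sum, sum_mul]
  rw [sum_comm' (t' := range (m + 1)) (s' := fun j => range (m - j + 1))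
    (fun l j => by simp only [mem_range]; omega)]
  refine sum_congr rfl fun j _ => sum_congr rfl fun l _ => ?_
  have h := congrArg (Nat.cast : ℕ → ℚ) (Nat.choose_mul_choose_sub_comm m l j)
  push_cast at h
  linear_combination eulerNumber l * x ^ j * h

lemma eulerPoly_add_one_add_eulerPoly (m : ℕ) (x : ℚ) :
    eulerPoly m (x + 1) + eulerPoly m x = 2 * x ^ m := by
  rw [eulerPoly_add_one, eulerPoly_eq_sum_pow, ← sum_add_distrib]
  simp_rw [← add_mul, ← mul_add, sum_range_choose_mul_eulerNumber_add_eulerNumber]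
  rw [sum_eq_single_of_mem m (self_mem_range_succ m) fun j hj hjm => by
    rw [if_neg (by grind), mul_zero, zero_mul]]
  simp

lemma sum_range_neg_one_pow_mul_add {R : Type*} [CommRing R] (f : ℕ → R) (n : ℕ) :
    ∑ l ∈ range n, (-1) ^ l * (f (l + 1) + f l) = f 0 - (-1) ^ n * f n := by
  induction n with
  | zero => simp
  | succ n ih => rw [sum_range_succ, ih, pow_succ]; ring

theorem alternating_sum_powers_even_general (n m : ℕ) (hne : Even n) :
    2 * ∑ l ∈ Finset.range n, (-1 : ℚ) ^ l * (l : ℚ) ^ m =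
      - ∑ l ∈ Finset.range m, (m.choose l : ℚ) * eulerNumber l * (n : ℚ) ^ (m - l) := by
  have telescope : 2 * ∑ l ∈ range n, (-1 : ℚ) ^ l * (l : ℚ) ^ m =
      eulerPoly m 0 - eulerPoly m n := by
    simp_rw [mul_sum, mul_left_comm (2 : ℚ), ← eulerPoly_add_one_add_eulerPoly]
    have := sum_range_neg_one_pow_mul_add (fun l : ℕ => eulerPoly m l) n
    push_cast at this
    rw [this, hne.neg_one_pow, one_mul]
  rw [telescope, eulerPoly_zero_right, eulerPoly, sum_range_succ, Nat.sub_self]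
  simp

/-- For even positive `n` and positive `m`,
`2 ∑_{l=0}^{n-1} (-1)^l l^m = - ∑_{l=0}^{m-1} C(m,l) E_l n^{m-l}`. -/
theorem alternating_sum_powers_even (n m : ℕ) (hn : 0 < n) (hne : Even n) (hm : 0 < m) :
    2 * ∑ l ∈ Finset.range n, (-1 : ℚ) ^ l * (l : ℚ) ^ m =
      - ∑ l ∈ Finset.range m, (m.choose l : ℚ) * eulerNumber l * (n : ℚ) ^ (m - l) :=
  alternating_sum_powers_even_general n m hne
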